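/- arXiv:2502.00135 — 2 statements merged into one kernel-verified Lean document; each statement's English description precedes it below -/
import Mathlib

section
/- Let T be a tree with k edges having a vertex x_0 adjacent to ℓ leaves of T, where 4ℓ > 3k. Then for every n ≥ k-1, ex*(Q_n, T) = (k-1)·2^{n-1}. -/
/-!
Lower bound: the subgraph of `Q_n` formed by the edges in the first `k - 1` directions, colored
by direction, has `(k - 1) 2^(n-1)` edges and only `k - 1` colors, so no rainbow tree with `k`
edges.

Upper bound: let `L` be the `ℓ` leaves at `x₀` and `t = k - ℓ`, so that the trunk `T - L` has
`t + 1` vertices and `4t ≤ k - 1`. Deleting vertices of degree `≤ 2t` one at a time costs at most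
`2t ≤ (k - 1)/2` edges per vertex and leaves a subgraph `G` of minimum degree `≥ 2t + 1`. If a
vertex `v` of `G` had degree `≥ k = ℓ + t` in `H`, the trunk could be embedded greedily into `G`
from `v`: a new vertex has `2t + 1` candidates, at most `t - 1` of them already used, at most
`t - 1` giving a used color, and, since two vertices of the cube have at most two common
neighbours, at most two adjacent to `v`; avoiding the latter keeps `N(v)` free for `L`, which is
then embedded into `≥ ℓ` neighbours of `v` with unused colors. So `H` has no such vertex, and
`2 e(H) ≤ (k - 1) 2^n`.
-/

open SimpleGraph

/-- An edge coloring is proper on `H` if distinct edges of `H` sharing a vertex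
receive different colors. -/
def IsProperEdgeColoring {V : Type*} (H : SimpleGraph V) (c : Sym2 V → ℕ) : Prop :=
  ∀ ⦃e₁ : Sym2 V⦄, e₁ ∈ H.edgeSet → ∀ ⦃e₂ : Sym2 V⦄, e₂ ∈ H.edgeSet →
    e₁ ≠ e₂ → (∃ v, v ∈ e₁ ∧ v ∈ e₂) → c e₁ ≠ c e₂

/-- The graph `H`, edge colored by `c`, contains a rainbow copy of `F`:
there is an (injective) copy of `F` in `H` all of whose edges receive
pairwise distinct colors. -/
def HasRainbowCopy {V W : Type*} (H : SimpleGraph V) (c : Sym2 V → ℕ)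
    (F : SimpleGraph W) : Prop :=
  ∃ f : W ↪ V, (∀ ⦃a b : W⦄, F.Adj a b → H.Adj (f a) (f b)) ∧
    ∀ ⦃a b a' b' : W⦄, F.Adj a b → F.Adj a' b' → s(a, b) ≠ s(a', b') →
      c s(f a, f b) ≠ c s(f a', f b')

/-- `H` admits a proper edge coloring with no rainbow copy of `F`. -/
def RainbowFree {V W : Type*} (H : SimpleGraph V) (F : SimpleGraph W) : Prop :=
  ∃ c : Sym2 V → ℕ, IsProperEdgeColoring H c ∧ ¬ HasRainbowCopy H c F

/-- The rainbow extremal number `ex*(G,F)`: the maximum number of edges of a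
subgraph `H` of `G` admitting a proper edge coloring with no rainbow copy of `F`. -/
noncomputable def rainbowExtremalNumber {V W : Type*} [Fintype V]
    (G : SimpleGraph V) (F : SimpleGraph W) : ℕ :=
  sSup {m | ∃ H : SimpleGraph V, H ≤ G ∧ RainbowFree H F ∧ m = H.edgeSet.ncard}

/-- The minimum degree of a subgraph, taken over its own vertex set. -/
noncomputable def subMinDegree {V : Type*} {G : SimpleGraph V} (H : G.Subgraph) : ℕ :=
  sInf {d | ∃ v ∈ H.verts, d = (H.neighborSet v).ncard}

/-- `δ*(G,F)`: the maximum of the minimum degree over all subgraphs `H` of `G`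
admitting a proper edge coloring with no rainbow copy of `F`. -/
noncomputable def rainbowMinDegree {V W : Type*} [Fintype V]
    (G : SimpleGraph V) (F : SimpleGraph W) : ℕ :=
  sSup {m | ∃ H : G.Subgraph, RainbowFree H.spanningCoe F ∧ m = subMinDegree H}

/-- The `n`-dimensional hypercube graph `Q_n`. -/
def cubeGraph (n : ℕ) : SimpleGraph (Fin n → Bool) where
  Adj x y := {i | x i ≠ y i}.ncard = 1
  symm := by
    constructor
    intro x y h
    have hs : {i | y i ≠ x i} = {i | x i ≠ y i} := by ext i; simp [ne_comm]
    rw [hs]; exact h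
  loopless := by
    constructor
    intro x h
    simp at h

/-- The star `K_{1,k}` with `k` edges. -/
def starGraph (k : ℕ) : SimpleGraph (Fin (k + 1)) where
  Adj i j := i ≠ j ∧ (i = 0 ∨ j = 0)
  symm := by constructor; intro i j h; exact ⟨h.1.symm, h.2.symm⟩
  loopless := by constructor; intro i h; exact h.1 rfl

/-- `G` contains a copy of `F` as a subgraph. -/
def ContainsCopy {V W : Type*} (G : SimpleGraph V) (F : SimpleGraph W) : Prop :=
  ∃ f : W ↪ V, ∀ ⦃a b : W⦄, F.Adj a b → G.Adj (f a) (f b)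

open Finset Classical

section Cube

variable {n : ℕ}

def flipBit (x : Fin n → Bool) (i : Fin n) : Fin n → Bool := Function.update x i (!x i)

lemma flipBit_ne_iff {x : Fin n → Bool} {i j : Fin n} : x j ≠ flipBit x i j ↔ j = i := by
  by_cases h : j = i
  · subst h; simp [flipBit]
  · simp [flipBit, h]

lemma flipBit_flipBit (x : Fin n → Bool) (i : Fin n) : flipBit (flipBit x i) i = x := by
  simp [flipBit]

lemma flipBit_injective (x : Fin n → Bool) : Function.Injective (flipBit x) := by
  intro i j h
  have : x i ≠ flipBit x j i := h ▸ flipBit_ne_iff.2 rfl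
  exact flipBit_ne_iff.1 this

lemma eq_flipBit_iff {x y : Fin n → Bool} {i : Fin n} :
    y = flipBit x i ↔ ∀ j, x j ≠ y j ↔ j = i := by
  constructor
  · rintro rfl j
    exact flipBit_ne_iff
  · intro h
    funext j
    by_cases hj : j = i
    · subst hj
      have := (h j).2 rfl
      simp only [flipBit, Function.update_self]
      revert this; cases x j <;> cases y j <;> simp
    · simp only [flipBit, Function.update_of_ne hj]
      exact (not_not.1 (mt (h j).1 hj)).symm

lemma cubeGraph_adj_iff {x y : Fin n → Bool} :
    (cubeGraph n).Adj x y ↔ ∃ i, y = flipBit x i := by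
  change {j | x j ≠ y j}.ncard = 1 ↔ _
  simp only [Set.ncard_eq_one, Set.ext_iff, Set.mem_ofPred_eq, Set.mem_singleton_iff,
    eq_flipBit_iff]

lemma cubeGraph_ncard_commonNeighbors_le {u w : Fin n → Bool} (huw : u ≠ w) :
    ((cubeGraph n).commonNeighbors u w).ncard ≤ 2 := by
  rcases ((cubeGraph n).commonNeighbors u w).eq_empty_or_nonempty with h | ⟨z, hz⟩
  · simp [h]
  obtain ⟨⟨i, hi⟩, ⟨j, hj⟩⟩ := ((cubeGraph n).mem_commonNeighbors.1 hz).imp cubeGraph_adj_iff.1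
    cubeGraph_adj_iff.1
  have hdiff : ∀ l, u l ≠ w l → l = i ∨ l = j := by
    intro l hl
    by_contra! hne
    have hu : u l = z l := not_not.1 (mt (eq_flipBit_iff.1 hi l).1 hne.1)
    have hw : w l = z l := not_not.1 (mt (eq_flipBit_iff.1 hj l).1 hne.2)
    exact hl (hu.trans hw.symm)
  have hsub : (cubeGraph n).commonNeighbors u w ⊆ {flipBit u i, flipBit u j} := by
    intro z' hz'
    obtain ⟨⟨i', rfl⟩, hwz'⟩ :=
      ((cubeGraph n).mem_commonNeighbors.1 hz').imp_left cubeGraph_adj_iff.1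
    obtain ⟨j', hj'⟩ := cubeGraph_adj_iff.1 hwz'
    -- flipping a coordinate where `u` and `w` agree cannot give a neighbour of `w ≠ u`
    have hi' : u i' ≠ w i' := by
      intro hui
      have hij : i' = j' := (eq_flipBit_iff.1 hj' i').1 (by simp [flipBit, hui])
      subst hij
      exact huw (by rw [← flipBit_flipBit u i', hj', flipBit_flipBit])
    rcases hdiff i' hi' with rfl | rfl <;> simp
  calc _ ≤ ({flipBit u i, flipBit u j} : Set (Fin n → Bool)).ncard :=
        Set.ncard_le_ncard hsub (Set.toFinite _)
    _ ≤ 2 := (Set.ncard_insert_le _ _).trans (by simp)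


lemma ncard_commonNeighbors_le_of_le_cubeGraph {H : SimpleGraph (Fin n → Bool)}
    (hH : H ≤ cubeGraph n) {u w : Fin n → Bool} (huw : u ≠ w) :
    (H.commonNeighbors u w).ncard ≤ 2 := by
  refine (Set.ncard_le_ncard (fun z hz => ?_) (Set.toFinite _)).trans
    (cubeGraph_ncard_commonNeighbors_le huw)
  rw [mem_commonNeighbors] at hz ⊢
  exact ⟨hH hz.1, hH hz.2⟩

end Cube

theorem HasRainbowCopy.card_edgeFinset_le {V W : Type*} [Fintype W] {H : SimpleGraph V}
    {c : Sym2 V → ℕ} {F : SimpleGraph W} (h : HasRainbowCopy H c F)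
    {P : Finset ℕ} (hP : ∀ x y, H.Adj x y → c s(x, y) ∈ P) : #F.edgeFinset ≤ #P := by
  obtain ⟨f, hadj, hrainbow⟩ := h
  refine card_le_card_of_injOn (fun e => c (e.map f)) ?_ ?_
  · rintro ⟨a, b⟩ hab
    exact hP _ _ (hadj (mem_edgeFinset.1 hab))
  · rintro ⟨a, b⟩ hab ⟨a', b'⟩ hab' heq
    by_contra hne
    exact hrainbow (mem_edgeFinset.1 hab) (mem_edgeFinset.1 hab') hne heq

section LowerBound

variable {n : ℕ}

def lowCube (n m : ℕ) : SimpleGraph (Fin n → Bool) where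
  Adj x y := (cubeGraph n).Adj x y ∧ ∀ i : Fin n, m ≤ i → x i = y i
  symm := ⟨fun _ _ h => ⟨h.1.symm, fun i hi => (h.2 i hi).symm⟩⟩
  loopless := ⟨fun x h => (cubeGraph n).loopless.irrefl x h.1⟩

lemma lowCube_le (m : ℕ) : lowCube n m ≤ cubeGraph n := fun _ _ h => h.1

lemma lowCube_adj_iff {m : ℕ} {x y : Fin n → Bool} :
    (lowCube n m).Adj x y ↔ ∃ i : Fin n, (i : ℕ) < m ∧ y = flipBit x i := by
  change (cubeGraph n).Adj x y ∧ _ ↔ _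
  rw [cubeGraph_adj_iff]
  constructor
  · rintro ⟨⟨i, rfl⟩, hlow⟩
    refine ⟨i, lt_of_not_ge fun hi => ?_, rfl⟩
    exact flipBit_ne_iff.2 rfl (hlow i hi)
  · rintro ⟨i, hi, rfl⟩
    refine ⟨⟨i, rfl⟩, fun j hj => not_not.1 fun hne => ?_⟩
    exact absurd (hi.trans_le hj) (by rw [flipBit_ne_iff.1 hne]; exact lt_irrefl _)

lemma lowCube_degree {m : ℕ} (hm : m ≤ n) (x : Fin n → Bool) : (lowCube n m).degree x = m := by
  have : (lowCube n m).neighborFinset x =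
      ({i : Fin n | (i : ℕ) < m} : Finset (Fin n)).image (flipBit x) := by
    ext y
    simp only [mem_neighborFinset, lowCube_adj_iff, mem_image, mem_filter, mem_univ, true_and]
    exact exists_congr fun i => and_congr_right fun _ => eq_comm
  rw [← card_neighborFinset_eq_degree, this, card_image_of_injective _ (flipBit_injective x),
    Fin.card_filter_val_lt, min_eq_right hm]

lemma card_edgeFinset_lowCube {m : ℕ} (hm : m ≤ n) :
    #(lowCube n m).edgeFinset = m * 2 ^ (n - 1) := by
  have h := (lowCube n m).sum_degrees_eq_twice_card_edges
  simp only [lowCube_degree hm, sum_const, card_univ, Fintype.card_fun, Fintype.card_bool,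
    Fintype.card_fin, smul_eq_mul] at h
  rcases n with _ | n
  · simp_all
  · rw [pow_succ] at h
    simp only [add_tsub_cancel_right]
    linarith

/-- On an edge of the cube the sum has a single term: the direction of the edge. -/
def direction (n : ℕ) : Sym2 (Fin n → Bool) → ℕ :=
  Sym2.lift ⟨fun x y => ∑ i ∈ {i | x i ≠ y i}, (i : ℕ), fun x y => by simp only [ne_comm]⟩

lemma direction_flipBit (x : Fin n → Bool) (i : Fin n) : direction n s(x, flipBit x i) = i := by
  simp [direction, flipBit_ne_iff, filter_eq']

lemma isProperEdgeColoring_direction {H : SimpleGraph (Fin n → Bool)} (hH : H ≤ cubeGraph n) :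
    IsProperEdgeColoring H (direction n) := by
  rintro e₁ he₁ e₂ he₂ hne ⟨x, hx₁, hx₂⟩
  obtain ⟨y, rfl⟩ := Sym2.mem_iff_exists.1 hx₁
  obtain ⟨z, rfl⟩ := Sym2.mem_iff_exists.1 hx₂
  obtain ⟨i, rfl⟩ := cubeGraph_adj_iff.1 (hH (H.mem_edgeSet.1 he₁))
  obtain ⟨j, rfl⟩ := cubeGraph_adj_iff.1 (hH (H.mem_edgeSet.1 he₂))
  rw [direction_flipBit, direction_flipBit]
  exact fun hij => hne (by rw [Fin.val_injective hij])

lemma not_hasRainbowCopy_lowCube {W : Type*} [Fintype W] {F : SimpleGraph W} {m : ℕ}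
    (hm : m < #F.edgeFinset) : ¬HasRainbowCopy (lowCube n m) (direction n) F := by
  intro h
  refine (h.card_edgeFinset_le (P := range m) ?_).not_gt (by simpa using hm)
  intro x y hxy
  obtain ⟨i, hi, rfl⟩ := lowCube_adj_iff.1 hxy
  simpa [direction_flipBit] using hi

lemma rainbowFree_lowCube {W : Type*} [Fintype W] {m : ℕ} {F : SimpleGraph W}
    (hm : m < #F.edgeFinset) :
    RainbowFree (lowCube n m) F :=
  ⟨direction n, isProperEdgeColoring_direction (lowCube_le m), not_hasRainbowCopy_lowCube hm⟩

end LowerBound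

section Core

variable {V : Type*} [Fintype V]

/-- Peeling off vertices of degree `< d` one at a time costs at most `d - 1` edges each, and
what remains is a subgraph of minimum degree `≥ d` on its support. -/
theorem two_mul_card_edgeFinset_le_of_forall_core {G : SimpleGraph V} {d D : ℕ}
    (hdD : 2 * (d - 1) ≤ D)
    (hcore : ∀ G' ≤ G, (∀ v ∈ G'.support, d ≤ G'.degree v) → ∀ v ∈ G'.support, G.degree v ≤ D) :
    2 * #G.edgeFinset ≤ D * G.support.ncard := by
  suffices ∀ s, ∀ G' ≤ G, G'.support.ncard = s → 2 * #G'.edgeFinset ≤ D * s from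
    this _ G le_rfl rfl
  intro s
  induction s using Nat.strong_induction_on with
  | _ s ih =>
  rintro G' hG' rfl
  by_cases hmin : ∀ v ∈ G'.support, d ≤ G'.degree v
  · rw [← sum_degrees_support_eq_twice_card_edges, Set.ncard_eq_toFinset_card', mul_comm]
    refine sum_le_card_nsmul _ _ _ fun v hv => ?_
    rw [Set.mem_toFinset] at hv
    exact (degree_le_of_le hG').trans (hcore G' hG' hmin v hv)
  push Not at hmin
  obtain ⟨x, hx, hxd⟩ := hmin
  have hdeg : G'.degree x ≤ #G'.edgeFinset := by
    rw [← card_incidenceFinset_eq_degree]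
    exact card_le_card (incidenceFinset_subset _ _)
  have hcard : #(G'.deleteIncidenceSet x).edgeFinset = #G'.edgeFinset - G'.degree x := by
    convert card_edgeFinset_deleteIncidenceSet G' x
  have hsupp : (G'.deleteIncidenceSet x).support.ncard + 1 ≤ G'.support.ncard := by
    calc _ ≤ (G'.support \ {x}).ncard + 1 :=
          Nat.add_le_add_right (Set.ncard_le_ncard (support_deleteIncidenceSet_subset G' x)
            (Set.toFinite _)) 1
      _ = G'.support.ncard := Set.ncard_sdiff_singleton_add_one hx (Set.toFinite _)
  have hrec : 2 * #(G'.deleteIncidenceSet x).edgeFinset ≤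
      D * (G'.deleteIncidenceSet x).support.ncard := by
    convert ih _ (by omega) _ ((deleteIncidenceSet_le G' x).trans hG') rfl
  have hD := Nat.mul_le_mul_left D hsupp
  rw [mul_add] at hD
  omega

end Core

section Tree

variable {W : Type*} {T : SimpleGraph W} {x₀ : W}

def ReachesWithin (T : SimpleGraph W) (x₀ : W) (S : Finset W) : Prop :=
  ∀ a ∈ S, ∃ p : T.Walk x₀ a, ∀ z ∈ p.support, z ∈ S

lemma ReachesWithin.insert_of_adj {S : Finset W} (hS : ReachesWithin T x₀ S) {a b : W} (hb : b ∈ S)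
    (hab : T.Adj b a) : ReachesWithin T x₀ (insert a S) := by
  intro z hz
  rcases mem_insert.1 hz with rfl | hz
  · obtain ⟨p, hp⟩ := hS b hb
    refine ⟨p.concat hab, fun y hy => ?_⟩
    rw [Walk.support_concat, List.mem_append, List.mem_singleton] at hy
    rcases hy with hy | rfl
    exacts [mem_insert_of_mem (hp y hy), mem_insert_self _ _]
  · obtain ⟨p, hp⟩ := hS z hz
    exact ⟨p, fun y hy => mem_insert_of_mem (hp y hy)⟩

/-- Otherwise the walk `b ⇝ x₀ ⇝ b'` inside `S` followed by the edge `b'a` would show that the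
edge `ab` is not a bridge. -/
lemma SimpleGraph.IsAcyclic.eq_of_adj_of_reachesWithin (hT : T.IsAcyclic) {S : Finset W}
    (hS : ReachesWithin T x₀ S) {a b b' : W} (ha : a ∉ S) (hb : b ∈ S) (hb' : b' ∈ S)
    (hab : T.Adj a b) (hab' : T.Adj a b') : b = b' := by
  by_contra hne
  obtain ⟨p, hp⟩ := hS b hb
  obtain ⟨p', hp'⟩ := hS b' hb'
  let q : T.Walk b a := (p.reverse.append p').concat hab'.symm
  have hbridge := isBridge_iff_forall_walk_mem_edges.1
    (isAcyclic_iff_forall_adj_isBridge.1 hT hab.symm) q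
  rw [Walk.edges_concat, List.concat_eq_append, List.mem_append, List.mem_singleton] at hbridge
  rcases hbridge with h | h
  · refine ha ?_
    have := Walk.snd_mem_support_of_mem_edges _ h
    rw [Walk.support_append, Walk.support_reverse, List.mem_append, List.mem_reverse] at this
    rcases this with h | h
    exacts [hp a h, hp' a (List.mem_of_mem_tail h)]
  · rcases Sym2.eq_iff.1 h with ⟨h, -⟩ | ⟨h, -⟩
    exacts [hne h, ha (h ▸ hb)]

lemma ReachesWithin.mem_or_eq_of_adj_insert {S : Finset W} (hS : ReachesWithin T x₀ S)
    (hT : T.IsAcyclic) {a b : W} (ha : a ∉ S) (hb : b ∈ S) (hba : T.Adj b a) {r₁ r₂ : W}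
    (hr₁ : r₁ ∈ insert a S) (hr₂ : r₂ ∈ insert a S) (hr : T.Adj r₁ r₂) :
    (r₁ ∈ S ∧ r₂ ∈ S) ∨ s(r₁, r₂) = s(b, a) := by
  have hparent : ∀ s ∈ S, T.Adj a s → s = b := fun s hs has =>
    hT.eq_of_adj_of_reachesWithin hS ha hs hb has hba.symm
  rcases mem_insert.1 hr₁ with rfl | h₁ <;> rcases mem_insert.1 hr₂ with rfl | h₂
  · exact absurd hr (T.loopless.irrefl _)
  · exact Or.inr (by rw [hparent r₂ h₂ hr, Sym2.eq_swap])
  · exact Or.inr (by rw [hparent r₁ h₁ hr.symm])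
  · exact Or.inl ⟨h₁, h₂⟩

variable [Fintype W]

noncomputable def pendantLeaves (T : SimpleGraph W) (x₀ : W) : Finset W :=
  {y | T.Adj x₀ y ∧ (T.neighborSet y).ncard = 1}

lemma mem_pendantLeaves {y : W} :
    y ∈ pendantLeaves T x₀ ↔ T.Adj x₀ y ∧ (T.neighborSet y).ncard = 1 := by
  simp [pendantLeaves]

lemma eq_of_mem_pendantLeaves {y z : W} (hy : y ∈ pendantLeaves T x₀) (hz : T.Adj y z) :
    z = x₀ := by
  obtain ⟨hx₀y, hdeg⟩ := mem_pendantLeaves.1 hy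
  obtain ⟨u, hu⟩ := Set.ncard_eq_one.1 hdeg
  have hz' : z ∈ T.neighborSet y := hz
  have hx₀' : x₀ ∈ T.neighborSet y := hx₀y.symm
  rw [hu, Set.mem_singleton_iff] at hz' hx₀'
  exact hz'.trans hx₀'.symm

lemma root_notMem_pendantLeaves : x₀ ∉ pendantLeaves T x₀ :=
  fun h => T.loopless.irrefl x₀ (mem_pendantLeaves.1 h).1

lemma card_pendantLeaves_lt : #(pendantLeaves T x₀) < Fintype.card W :=
  card_lt_univ_of_notMem root_notMem_pendantLeaves

lemma notMem_pendantLeaves_or_exists_of_adj {a b : W} (hab : T.Adj a b) :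
    (a ∉ pendantLeaves T x₀ ∧ b ∉ pendantLeaves T x₀) ∨
      ∃ y ∈ pendantLeaves T x₀, s(a, b) = s(x₀, y) := by
  by_cases ha : a ∈ pendantLeaves T x₀
  · exact Or.inr ⟨a, ha, by rw [eq_of_mem_pendantLeaves ha hab, Sym2.eq_swap]⟩
  by_cases hb : b ∈ pendantLeaves T x₀
  · exact Or.inr ⟨b, hb, by rw [eq_of_mem_pendantLeaves hb hab.symm]⟩
  exact Or.inl ⟨ha, hb⟩

/-- A walk from `x₀` to `z` leaves `S ∪ pendantLeaves T x₀` along some edge, which cannot start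
at a pendant leaf since its only neighbour `x₀` lies in `S`. -/
lemma exists_adj_of_notMem_pendantLeaves (hT : T.Connected) {S : Finset W} (hx₀ : x₀ ∈ S)
    {z : W} (hzS : z ∉ S) (hzL : z ∉ pendantLeaves T x₀) :
    ∃ a b, a ∉ S ∧ a ∉ pendantLeaves T x₀ ∧ b ∈ S ∧ T.Adj b a := by
  obtain ⟨p⟩ := hT.preconnected x₀ z
  obtain ⟨d, -, hd₁, hd₂⟩ := p.exists_boundary_dart (↑S ∪ ↑(pendantLeaves T x₀))
    (Or.inl hx₀) (by simp [hzS, hzL])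
  simp only [Set.mem_union, mem_coe, not_or] at hd₁ hd₂
  refine ⟨d.snd, d.fst, hd₂.1, hd₂.2, hd₁.resolve_right fun hL => hd₂.1 ?_, d.adj⟩
  rw [eq_of_mem_pendantLeaves hL d.adj]
  exact hx₀

end Tree

section ProperColoring

variable {V : Type*} {H : SimpleGraph V} {c : Sym2 V → ℕ}

lemma IsProperEdgeColoring.ne_of_adj (hc : IsProperEdgeColoring H c) {u w₁ w₂ : V}
    (h₁ : H.Adj u w₁) (h₂ : H.Adj u w₂) (hne : w₁ ≠ w₂) : c s(u, w₁) ≠ c s(u, w₂) := by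
  refine hc h₁ h₂ (fun h => hne ?_) ⟨u, Sym2.mem_mk_left _ _, Sym2.mem_mk_left _ _⟩
  rcases Sym2.eq_iff.1 h with ⟨-, h⟩ | ⟨h, -⟩
  exacts [h, absurd h.symm h₂.ne']

lemma IsProperEdgeColoring.card_filter_color_mem_le (hc : IsProperEdgeColoring H c) {u : V}
    {A : Finset V} (hA : ∀ w ∈ A, H.Adj u w) (C : Finset ℕ) :
    #{w ∈ A | c s(u, w) ∈ C} ≤ #C := by
  refine card_le_card_of_injOn (fun w => c s(u, w)) (fun w hw => (mem_filter.1 hw).2) ?_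
  intro w₁ hw₁ w₂ hw₂ heq
  by_contra hne
  exact hc.ne_of_adj (hA _ (mem_filter.1 hw₁).1) (hA _ (mem_filter.1 hw₂).1) hne heq

end ProperColoring

section GreedyEmbedding

variable {V W : Type*} {T : SimpleGraph W} {x₀ : W} {H G : SimpleGraph V} {c : Sym2 V → ℕ}
  {v : V} {S : Finset W} {φ : W → V} {C : Finset ℕ}

/-- The field `not_adj_root` keeps the `H`-neighbourhood of `v` free for the pendant leaves,
which are attached to `x₀` at the end. -/
structure IsGreedyEmbedding (T : SimpleGraph W) (x₀ : W) (H G : SimpleGraph V)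
    (c : Sym2 V → ℕ) (v : V) (S : Finset W) (φ : W → V) (C : Finset ℕ) : Prop where
  root_mem : x₀ ∈ S
  reachesWithin : ReachesWithin T x₀ S
  map_root : φ x₀ = v
  injOn : Set.InjOn φ S
  mem_support : ∀ a ∈ S, φ a ∈ G.support
  map_adj : ∀ a ∈ S, ∀ b ∈ S, T.Adj a b → G.Adj (φ a) (φ b)
  not_adj_root : ∀ a ∈ S, a ≠ x₀ → ¬T.Adj x₀ a → ¬H.Adj v (φ a)
  color_mem : ∀ a ∈ S, ∀ b ∈ S, T.Adj a b → c s(φ a, φ b) ∈ C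
  card_colors_lt : #C < #S
  rainbow : ∀ a ∈ S, ∀ b ∈ S, ∀ a' ∈ S, ∀ b' ∈ S, T.Adj a b → T.Adj a' b' →
    s(a, b) ≠ s(a', b') → c s(φ a, φ b) ≠ c s(φ a', φ b')

lemma isGreedyEmbedding_singleton (hv : v ∈ G.support) :
    IsGreedyEmbedding T x₀ H G c v {x₀} (fun _ => v) ∅ := by
  have hno : ∀ a ∈ ({x₀} : Finset W), ∀ b ∈ ({x₀} : Finset W), ¬T.Adj a b := by
    simp
  refine ⟨mem_singleton_self _, ?_, rfl, ?_, fun _ _ => hv, ?_, ?_, ?_, by simp, ?_⟩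
  · intro a ha
    rw [mem_singleton.1 ha]
    exact ⟨Walk.nil, by simp⟩
  · simp
  · exact fun a ha b hb hab => absurd hab (hno a ha b hb)
  · exact fun a ha ha' _ => absurd (mem_singleton.1 ha) ha'
  · exact fun a ha b hb hab => absurd hab (hno a ha b hb)
  · exact fun a ha b hb _ _ _ _ hab => absurd hab (hno a ha b hb)

lemma IsGreedyEmbedding.extend (h : IsGreedyEmbedding T x₀ H G c v S φ C) (hT : T.IsAcyclic)
    {a b : W} (ha : a ∉ S) (hb : b ∈ S) (hba : T.Adj b a) {w : V} (hw : G.Adj (φ b) w)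
    (hwS : w ∉ S.image φ) (hwC : c s(φ b, w) ∉ C) (hwv : b ≠ x₀ → ¬H.Adj v w) :
    IsGreedyEmbedding T x₀ H G c v (insert a S) (Function.update φ a w)
      (insert (c s(φ b, w)) C) := by
  set φ' := Function.update φ a w
  have hφ'a : φ' a = w := Function.update_self a w φ
  have hφ'S : ∀ s ∈ S, φ' s = φ s := fun s hs =>
    Function.update_of_ne (fun hsa : s = a => ha (hsa ▸ hs)) w φ
  have hedge : ∀ r₁ ∈ insert a S, ∀ r₂ ∈ insert a S, T.Adj r₁ r₂ →
      (r₁ ∈ S ∧ r₂ ∈ S) ∨ (s(r₁, r₂) = s(b, a) ∧ s(φ' r₁, φ' r₂) = s(φ b, w)) :=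
    fun r₁ hr₁ r₂ hr₂ hr =>
      (h.reachesWithin.mem_or_eq_of_adj_insert hT ha hb hba hr₁ hr₂ hr).imp_right fun he =>
        ⟨he, by rw [← Sym2.map_mk, he, Sym2.map_mk, hφ'a, hφ'S b hb]⟩
  refine ⟨mem_insert_of_mem h.root_mem, h.reachesWithin.insert_of_adj hb hba,
    ?_, ?_, ?_, ?_, ?_, ?_, ?_, ?_⟩
  · rw [hφ'S _ h.root_mem, h.map_root]
  · rw [coe_insert, Set.injOn_insert (by simpa using ha), hφ'a,
      Set.image_congr fun s hs => hφ'S s hs]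
    exact ⟨fun s hs s' hs' he => h.injOn hs hs' (by rwa [← hφ'S s hs, ← hφ'S s' hs']),
      by simpa using hwS⟩
  · intro s hs
    rcases mem_insert.1 hs with rfl | hs
    exacts [hφ'a ▸ ⟨_, hw.symm⟩, hφ'S s hs ▸ h.mem_support s hs]
  · intro r₁ hr₁ r₂ hr₂ hr
    rcases hedge r₁ hr₁ r₂ hr₂ hr with ⟨hr₁, hr₂⟩ | ⟨-, he⟩
    · rw [hφ'S _ hr₁, hφ'S _ hr₂]
      exact h.map_adj _ hr₁ _ hr₂ hr
    · rw [← mem_edgeSet, he]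
      exact hw
  · intro s hs hsx hxs
    rcases mem_insert.1 hs with rfl | hs
    · exact hφ'a ▸ hwv fun hbx => hxs (hbx ▸ hba)
    · exact hφ'S s hs ▸ h.not_adj_root s hs hsx hxs
  · intro r₁ hr₁ r₂ hr₂ hr
    rcases hedge r₁ hr₁ r₂ hr₂ hr with ⟨hr₁, hr₂⟩ | ⟨-, he⟩
    · rw [hφ'S _ hr₁, hφ'S _ hr₂]
      exact mem_insert_of_mem (h.color_mem _ hr₁ _ hr₂ hr)
    · exact he ▸ mem_insert_self _ _
  · rw [card_insert_of_notMem ha]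
    exact (card_insert_le _ _).trans_lt (Nat.succ_lt_succ h.card_colors_lt)
  · intro r₁ hr₁ r₂ hr₂ r₁' hr₁' r₂' hr₂' hr hr' hne
    rcases hedge r₁ hr₁ r₂ hr₂ hr with ⟨hr₁, hr₂⟩ | ⟨he, hφe⟩ <;>
      rcases hedge r₁' hr₁' r₂' hr₂' hr' with ⟨hr₁', hr₂'⟩ | ⟨he', hφe'⟩
    · rw [hφ'S _ hr₁, hφ'S _ hr₂, hφ'S _ hr₁', hφ'S _ hr₂']
      exact h.rainbow _ hr₁ _ hr₂ _ hr₁' _ hr₂' hr hr' hne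
    · rw [hφ'S _ hr₁, hφ'S _ hr₂, hφe']
      exact fun hcol => hwC (hcol ▸ h.color_mem _ hr₁ _ hr₂ hr)
    · rw [hφ'S _ hr₁', hφ'S _ hr₂', hφe]
      exact fun hcol => hwC (hcol ▸ h.color_mem _ hr₁' _ hr₂' hr')
    · exact absurd (he.trans he'.symm) hne

variable [Fintype V]

/-- Among the `≥ 2t + 1` neighbours of `φ b` in `G`, at most `#S - 1` are already used, at most
`#C < #S` give a used color and, unless `b = x₀`, at most two are also adjacent to `v`. -/
lemma IsGreedyEmbedding.exists_extension_vertex (h : IsGreedyEmbedding T x₀ H G c v S φ C)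
    (hc : IsProperEdgeColoring H c) (hGH : G ≤ H)
    (hcodeg : ∀ u w, u ≠ w → (H.commonNeighbors u w).ncard ≤ 2) {t : ℕ}
    (hG : ∀ u ∈ G.support, 2 * t + 1 ≤ G.degree u) (hSt : #S ≤ t) {b : W} (hb : b ∈ S) :
    ∃ w, G.Adj (φ b) w ∧ w ∉ S.image φ ∧ c s(φ b, w) ∉ C ∧ (b ≠ x₀ → ¬H.Adj v w) := by
  set u := φ b
  let B := (S.image φ).erase u ∪ {w ∈ G.neighborFinset u | c s(u, w) ∈ C} ∪
    if b = x₀ then ∅ else (H.commonNeighbors u v).toFinset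
  have hB₁ : #((S.image φ).erase u) + 1 ≤ #S := by
    rw [card_erase_add_one (mem_image_of_mem φ hb)]
    exact card_image_le
  have hB₂ : #{w ∈ G.neighborFinset u | c s(u, w) ∈ C} ≤ #C :=
    hc.card_filter_color_mem_le (fun w hw => hGH ((mem_neighborFinset _ _ _).1 hw)) C
  have hB₃ : #(if b = x₀ then ∅ else (H.commonNeighbors u v).toFinset) ≤ 2 := by
    split_ifs with hbx
    · simp
    · rw [← Set.ncard_eq_toFinset_card']
      exact hcodeg _ _ fun huv => hbx (h.injOn hb h.root_mem (huv.trans h.map_root.symm))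
  have hcard : #B < #(G.neighborFinset u) := by
    have := h.card_colors_lt
    calc #B ≤ #((S.image φ).erase u) + #{w ∈ G.neighborFinset u | c s(u, w) ∈ C} +
          #(if b = x₀ then ∅ else (H.commonNeighbors u v).toFinset) :=
          (card_union_le _ _).trans (Nat.add_le_add_right (card_union_le _ _) _)
      _ < 2 * t + 1 := by omega
      _ ≤ _ := by
          rw [card_neighborFinset_eq_degree]
          exact hG u (h.mem_support b hb)
  obtain ⟨w, hwA, hwB⟩ := exists_mem_notMem_of_card_lt_card hcard
  have hadj : G.Adj u w := (mem_neighborFinset _ _ _).1 hwA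
  simp only [B, mem_union, mem_erase, mem_filter, not_or, not_and] at hwB
  refine ⟨w, hadj, fun hw => hwB.1.1 hadj.ne' hw, fun hw => hwB.1.2 hwA hw, fun hbx hvw => ?_⟩
  refine hwB.2 ?_
  rw [if_neg hbx, Set.mem_toFinset]
  exact ⟨hGH hadj, hvw⟩

variable [Fintype W]

lemma exists_isGreedyEmbedding_compl_pendantLeaves (hT : T.IsTree)
    (hc : IsProperEdgeColoring H c) (hGH : G ≤ H)
    (hcodeg : ∀ u w, u ≠ w → (H.commonNeighbors u w).ncard ≤ 2) {t : ℕ}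
    (hG : ∀ u ∈ G.support, 2 * t + 1 ≤ G.degree u) (htrunk : #(pendantLeaves T x₀)ᶜ = t + 1)
    (hv : v ∈ G.support) : ∃ φ C, IsGreedyEmbedding T x₀ H G c v (pendantLeaves T x₀)ᶜ φ C := by
  have grow : ∀ m ≤ t, ∃ S φ C, S ⊆ (pendantLeaves T x₀)ᶜ ∧ #S = m + 1 ∧
      IsGreedyEmbedding T x₀ H G c v S φ C := by
    intro m
    induction m with
    | zero =>
      exact fun _ => ⟨{x₀}, _, _, by simpa using root_notMem_pendantLeaves, rfl,
        isGreedyEmbedding_singleton hv⟩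
    | succ m ih =>
      intro hm
      obtain ⟨S, φ, C, hStrunk, hScard, h⟩ := ih (by omega)
      obtain ⟨z, hz, hzS⟩ := exists_mem_notMem_of_card_lt_card (s := S)
        (t := (pendantLeaves T x₀)ᶜ) (by omega)
      obtain ⟨a, b, haS, haL, hb, hba⟩ :=
        exists_adj_of_notMem_pendantLeaves hT.connected h.root_mem hzS (mem_compl.1 hz)
      obtain ⟨w, hw, hwS, hwC, hwv⟩ :=
        h.exists_extension_vertex hc hGH hcodeg hG (by omega) hb
      refine ⟨insert a S, _, _, insert_subset (mem_compl.2 haL) hStrunk, ?_,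
        h.extend hT.isAcyclic haS hb hba hw hwS hwC hwv⟩
      rw [card_insert_of_notMem haS, hScard]
  obtain ⟨S, φ, C, hStrunk, hScard, h⟩ := grow t le_rfl
  obtain rfl := eq_of_subset_of_card_le hStrunk (by omega)
  exact ⟨φ, C, h⟩

/-- Images of the trunk are never neighbours of `v` through an unused color, by `not_adj_root`
and `color_mem`, so the leaves can be sent to such neighbours. -/
lemma IsGreedyEmbedding.exists_injective_extension
    (h : IsGreedyEmbedding T x₀ H G c v (pendantLeaves T x₀)ᶜ φ C)
    (hc : IsProperEdgeColoring H c) (hdeg : #(pendantLeaves T x₀) + #C ≤ H.degree v) :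
    ∃ g : W → V, Function.Injective g ∧ (∀ x ∉ pendantLeaves T x₀, g x = φ x) ∧
      ∀ y ∈ pendantLeaves T x₀, H.Adj v (g y) ∧ c s(v, g y) ∉ C := by
  set L := pendantLeaves T x₀
  let good : Finset V := {w ∈ H.neighborFinset v | c s(v, w) ∉ C}
  have hgood : #L ≤ #good := by
    change _ ≤ #{w ∈ H.neighborFinset v | c s(v, w) ∉ C}
    have := card_filter_add_card_filter_not (s := H.neighborFinset v) (fun w => c s(v, w) ∈ C)
    have := hc.card_filter_color_mem_le (u := v) (fun w hw => (mem_neighborFinset _ _ _).1 hw) C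
    rw [card_neighborFinset_eq_degree] at *
    omega
  obtain ⟨e⟩ := Function.Embedding.nonempty_of_card_le (α := L) (β := good) (by simpa using hgood)
  let g : W → V := fun x => if hx : x ∈ L then e ⟨x, hx⟩ else φ x
  have hg_leaf : ∀ y ∈ L, H.Adj v (g y) ∧ c s(v, g y) ∉ C := by
    intro y hy
    have := (e ⟨y, hy⟩).2
    simp only [good, mem_filter, mem_neighborFinset] at this
    simpa [g, hy] using this
  have hg_trunk : ∀ x ∉ L, g x = φ x := fun x hx => dif_neg hx
  have htrunk_not_good : ∀ x ∉ L, H.Adj v (φ x) → c s(v, φ x) ∈ C := by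
    intro x hx hvx
    by_cases hx₀ : x = x₀
    · subst hx₀
      exact absurd (h.map_root ▸ hvx) (H.loopless.irrefl v)
    by_cases hx₀x : T.Adj x₀ x
    · rw [← h.map_root]
      exact h.color_mem _ (mem_compl.2 root_notMem_pendantLeaves) _ (mem_compl.2 hx) hx₀x
    · exact absurd hvx (h.not_adj_root x (mem_compl.2 hx) hx₀ hx₀x)
  refine ⟨g, fun x y hxy => ?_, hg_trunk, hg_leaf⟩
  by_cases hx : x ∈ L <;> by_cases hy : y ∈ L
  · simpa [g, hx, hy] using hxy
  · have := hg_leaf x hx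
    rw [hxy, hg_trunk y hy] at this
    exact absurd (htrunk_not_good y hy this.1) this.2
  · have := hg_leaf y hy
    rw [← hxy, hg_trunk x hx] at this
    exact absurd (htrunk_not_good x hx this.1) this.2
  · rw [hg_trunk x hx, hg_trunk y hy] at hxy
    exact h.injOn (mem_compl.2 hx) (mem_compl.2 hy) hxy

lemma IsGreedyEmbedding.hasRainbowCopy
    (h : IsGreedyEmbedding T x₀ H G c v (pendantLeaves T x₀)ᶜ φ C)
    (hc : IsProperEdgeColoring H c) (hGH : G ≤ H)
    (hdeg : #(pendantLeaves T x₀) + #C ≤ H.degree v) : HasRainbowCopy H c T := by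
  set L := pendantLeaves T x₀
  obtain ⟨g, hg_inj, hg_trunk, hg_leaf⟩ := h.exists_injective_extension hc hdeg
  have hg_root : g x₀ = v := (hg_trunk _ root_notMem_pendantLeaves).trans h.map_root
  have hedge : ∀ a b, T.Adj a b → (a ∉ L ∧ b ∉ L) ∨
      ∃ y ∈ L, s(a, b) = s(x₀, y) ∧ s(g a, g b) = s(v, g y) := fun a b hab =>
    (notMem_pendantLeaves_or_exists_of_adj hab).imp_right fun ⟨y, hy, he⟩ =>
      ⟨y, hy, he, by rw [← Sym2.map_mk, he, Sym2.map_mk, hg_root]⟩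
  refine ⟨⟨g, hg_inj⟩, fun a b hab => ?_, fun a b a' b' hab hab' hne => ?_⟩
  · rcases hedge a b hab with ⟨ha, hb⟩ | ⟨y, hy, -, he⟩
    · simp only [Function.Embedding.coeFn_mk, hg_trunk a ha, hg_trunk b hb]
      exact hGH (h.map_adj _ (mem_compl.2 ha) _ (mem_compl.2 hb) hab)
    · rw [Function.Embedding.coeFn_mk, ← mem_edgeSet, he]
      exact (hg_leaf y hy).1
  simp only [Function.Embedding.coeFn_mk]
  rcases hedge a b hab with ⟨ha, hb⟩ | ⟨y, hy, he, hge⟩ <;>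
    rcases hedge a' b' hab' with ⟨ha', hb'⟩ | ⟨y', hy', he', hge'⟩
  · rw [hg_trunk a ha, hg_trunk b hb, hg_trunk a' ha', hg_trunk b' hb']
    exact h.rainbow _ (mem_compl.2 ha) _ (mem_compl.2 hb) _ (mem_compl.2 ha')
      _ (mem_compl.2 hb') hab hab' hne
  · rw [hg_trunk a ha, hg_trunk b hb, hge']
    exact fun hcol => (hg_leaf y' hy').2
      (hcol ▸ h.color_mem _ (mem_compl.2 ha) _ (mem_compl.2 hb) hab)
  · rw [hg_trunk a' ha', hg_trunk b' hb', hge]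
    exact fun hcol => (hg_leaf y hy).2
      (hcol ▸ h.color_mem _ (mem_compl.2 ha') _ (mem_compl.2 hb') hab')
  · rw [hge, hge']
    refine hc.ne_of_adj (hg_leaf y hy).1 (hg_leaf y' hy').1 (hg_inj.ne fun hyy => hne ?_)
    rw [he, he', hyy]

end GreedyEmbedding

section Main

variable {W : Type*} [Fintype W] {T : SimpleGraph W} {x₀ : W}

lemma SimpleGraph.IsTree.card_pendantLeaves_le (hT : T.IsTree) :
    #(pendantLeaves T x₀) ≤ #T.edgeFinset := by
  have := hT.card_edgeFinset
  have := card_pendantLeaves_lt (T := T) (x₀ := x₀)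
  omega

theorem card_edgeFinset_le_of_rainbowFree {n ℓ : ℕ} (hT : T.IsTree)
    (hℓ : #(pendantLeaves T x₀) = ℓ) (hl : 3 * #T.edgeFinset < 4 * ℓ)
    {H : SimpleGraph (Fin n → Bool)} (hH : H ≤ cubeGraph n) (hRF : RainbowFree H T) :
    #H.edgeFinset ≤ (#T.edgeFinset - 1) * 2 ^ (n - 1) := by
  obtain ⟨c, hc, hnot⟩ := hRF
  set k := #T.edgeFinset
  have hW := hT.card_edgeFinset
  have hLk := hT.card_pendantLeaves_le (x₀ := x₀)
  have htrunk : #(pendantLeaves T x₀)ᶜ = (k - ℓ) + 1 := by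
    rw [card_compl]
    omega
  have hcore : ∀ G ≤ H, (∀ v ∈ G.support, 2 * (k - ℓ) + 1 ≤ G.degree v) →
      ∀ v ∈ G.support, H.degree v ≤ k - 1 := by
    intro G hGH hG v hv
    by_contra! hdeg
    obtain ⟨φ, C, h⟩ :=
      exists_isGreedyEmbedding_compl_pendantLeaves hT hc hGH
        (fun _ _ => ncard_commonNeighbors_le_of_le_cubeGraph hH) hG htrunk hv
    have := h.card_colors_lt
    exact hnot (h.hasRainbowCopy hc hGH (by omega))
  have h2E := two_mul_card_edgeFinset_le_of_forall_core (by omega) hcore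
  have hsupp : H.support.ncard ≤ 2 ^ n := by
    simpa using Set.ncard_le_card H.support
  have : 2 * #H.edgeFinset ≤ (k - 1) * 2 ^ n :=
    h2E.trans (Nat.mul_le_mul_left _ hsupp)
  rcases n with _ | n
  · simp only [pow_zero, mul_one] at this ⊢
    omega
  · rw [pow_succ, ← mul_assoc] at this
    simp only [add_tsub_cancel_right]
    omega

end Main

/-- Let `T` be a tree with `k` edges having a vertex `x₀` adjacent to
`ℓ` leaves, where `4ℓ > 3k`. Then for every `n ≥ k-1`,
`ex*(Q_n, T) = (k-1) · 2^(n-1)`. -/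
theorem stmt7 {W : Type*} [Fintype W] (T : SimpleGraph W) (hT : T.IsTree)
    (k ℓ n : ℕ) (hTk : T.edgeSet.ncard = k) (x0 : W)
    (hx0 : {y : W | T.Adj x0 y ∧ (T.neighborSet y).ncard = 1}.ncard = ℓ)
    (hl : 3 * k < 4 * ℓ) (hn : k - 1 ≤ n) :
    rainbowExtremalNumber (cubeGraph n) T = (k - 1) * 2 ^ (n - 1) := by
  have hk : #T.edgeFinset = k := by rw [← hTk, ← coe_edgeFinset, Set.ncard_coe_finset]
  have hℓ : #(pendantLeaves T x0) = ℓ := by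
    rw [← hx0, ← Set.ncard_coe_finset]
    simp [pendantLeaves]
  have hℓk := hT.card_pendantLeaves_le (x₀ := x0)
  refine IsGreatest.csSup_eq ⟨⟨lowCube n (k - 1), lowCube_le _, rainbowFree_lowCube (by omega),
    ?_⟩, ?_⟩
  · rw [← coe_edgeFinset, Set.ncard_coe_finset, card_edgeFinset_lowCube hn]
  · rintro _ ⟨H, hH, hRF, rfl⟩
    rw [← coe_edgeFinset, Set.ncard_coe_finset, ← hk]
    exact card_edgeFinset_le_of_rainbowFree hT hℓ (by omega) hH hRF
end

section
/- If G is a triangle-free graph (containing no K_3), then ex*(G, P_3) ≤ |V(G)|; that is, every subgraph of G with more than |V(G)| edges contains, under every proper edge coloring, a rainbow path with 3 edges. -/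
open SimpleGraph

/-!
Let `H` be triangle-free with a proper edge colouring and no rainbow `P₃`. If `vw` is an edge with
`deg v ≥ 3` and `w` has a neighbour `x ≠ v`, then for every neighbour `u ≠ w` of `v` the walk
`u v w x` is a path (`u ≠ x` since there is no triangle `v w x`), so it is not rainbow, and
properness at `v` and `w` forces `c(uv) = c(wx)`. Two such `u` then give `v` two edges of the same
colour. So all neighbours of vertices of degree at least `3` are leaves, and a discharging argument
gives `|E(H)| ≤ |V(H)|`.
-/

open Finset

namespace SimpleGraph

variable {V : Type*}

theorem containsCopy_iff_isContained {W : Type*} {G : SimpleGraph V} {F : SimpleGraph W} :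
    ContainsCopy G F ↔ F ⊑ G :=
  ⟨fun ⟨f, hf⟩ ↦ ⟨⟨⟨f, fun h ↦ hf h⟩, f.injective⟩⟩,
    fun ⟨f⟩ ↦ ⟨f.toEmbedding, fun _ _ h ↦ f.toHom.map_adj h⟩⟩

theorem cliqueFree_iff_not_containsCopy_top {G : SimpleGraph V} {n : ℕ} :
    G.CliqueFree n ↔ ¬ ContainsCopy G (⊤ : SimpleGraph (Fin n)) := by
  rw [containsCopy_iff_isContained, ← not_cliqueFree_iff_top_isContained, not_not]

theorem exists_eq_castSucc_succ_of_pathGraph_adj {n : ℕ} {i j : Fin (n + 1)}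
    (h : (pathGraph (n + 1)).Adj i j) : ∃ k : Fin n, s(i, j) = s(k.castSucc, k.succ) := by
  rw [pathGraph_adj] at h
  rcases h with h | h
  · exact ⟨⟨i, by omega⟩, by rw [Sym2.eq_iff]; left; constructor <;> ext <;> simp [h]⟩
  · exact ⟨⟨j, by omega⟩, by rw [Sym2.eq_iff]; right; constructor <;> ext <;> simp [h]⟩

theorem card_edgeFinset_le_card_of_degree_eq_one [Fintype V] (G : SimpleGraph V)
    [DecidableRel G.Adj] (h : ∀ v w, G.Adj v w → 3 ≤ G.degree v → G.degree w = 1) :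
    #G.edgeFinset ≤ Fintype.card V := by
  let B := univ.filter (3 ≤ G.degree ·)
  -- Both half-edges of an edge at a vertex of `B` are charged to its other endpoint, a leaf;
  -- every other half-edge to its own vertex. No vertex is charged more than twice.
  let load (x : V) : ℕ := #(B.filter (G.Adj · x)) + if 3 ≤ G.degree x then 0 else G.degree x
  have hsum : ∑ x, G.degree x = ∑ x, load x := by
    have hB : ∑ b ∈ B, G.degree b = ∑ x, #(B.filter (G.Adj · x)) := by
      simp_rw [← card_neighborFinset_eq_degree, neighborFinset_eq_filter]
      exact sum_card_bipartiteAbove_eq_sum_card_bipartiteBelow _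
    rw [sum_add_distrib, ← hB, sum_filter, ← sum_add_distrib]
    exact sum_congr rfl fun x _ ↦ by split_ifs <;> simp
  have hload (x : V) : load x ≤ 2 := by
    have hle : #(B.filter (G.Adj · x)) ≤ G.degree x := by
      rw [← card_neighborFinset_eq_degree]
      exact card_le_card fun b hb ↦ by simpa [adj_comm] using (mem_filter.mp hb).2
    rcases (B.filter (G.Adj · x)).eq_empty_or_nonempty with hempty | ⟨b, hb⟩
    · simp only [load, hempty, card_empty]
      split_ifs <;> omega
    · rw [mem_filter, mem_filter] at hb
      have hx := h b x hb.2 hb.1.2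
      simp only [load, hx, if_neg (by norm_num : ¬ 3 ≤ 1)]
      omega
  suffices 2 * #G.edgeFinset ≤ 2 * Fintype.card V by omega
  calc 2 * #G.edgeFinset = ∑ x, load x := G.sum_degrees_eq_twice_card_edges ▸ hsum
    _ ≤ ∑ _x : V, 2 := sum_le_sum fun x _ ↦ hload x
    _ = 2 * Fintype.card V := by simp [mul_comm]

end SimpleGraph

theorem IsProperEdgeColoring.apply_ne {V : Type*} {H : SimpleGraph V} {c : Sym2 V → ℕ}
    (hc : IsProperEdgeColoring H c) {u v w : V} (huv : H.Adj u v) (hvw : H.Adj v w)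
    (huw : u ≠ w) : c s(u, v) ≠ c s(v, w) :=
  hc huv hvw (fun h ↦ huw (by simpa [huv.ne] using Sym2.eq_iff.mp h)) ⟨v, by simp, by simp⟩

theorem hasRainbowCopy_pathGraph {V : Type*} {H : SimpleGraph V} {c : Sym2 V → ℕ} {n : ℕ}
    (f : Fin (n + 1) ↪ V) (hadj : ∀ k : Fin n, H.Adj (f k.castSucc) (f k.succ))
    (hinj : Function.Injective fun k : Fin n ↦ c s(f k.castSucc, f k.succ)) :
    HasRainbowCopy H c (pathGraph (n + 1)) := by
  refine ⟨f, fun i j hij ↦ ?_, fun i j i' j' hij hij' hne ↦ ?_⟩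
  · obtain ⟨k, hk⟩ := exists_eq_castSucc_succ_of_pathGraph_adj hij
    rcases Sym2.eq_iff.mp hk with ⟨rfl, rfl⟩ | ⟨rfl, rfl⟩
    exacts [hadj k, (hadj k).symm]
  · obtain ⟨k, hk⟩ := exists_eq_castSucc_succ_of_pathGraph_adj hij
    obtain ⟨k', hk'⟩ := exists_eq_castSucc_succ_of_pathGraph_adj hij'
    have hmap (i j : Fin (n + 1)) : s(f i, f j) = Sym2.map f s(i, j) := rfl
    rw [hmap, hmap, hk, hk']
    exact hinj.ne fun h ↦ hne (by rw [hk, hk', h])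

theorem IsProperEdgeColoring.apply_eq_of_not_hasRainbowCopy {V : Type*} {H : SimpleGraph V}
    {c : Sym2 V → ℕ} (hc : IsProperEdgeColoring H c)
    (hno : ¬ HasRainbowCopy H c (pathGraph 4)) {a b d e : V} (hab : H.Adj a b)
    (hbd : H.Adj b d) (hde : H.Adj d e) (had : a ≠ d) (hae : a ≠ e) (hbe : b ≠ e) :
    c s(a, b) = c s(d, e) := by
  by_contra hne
  have hinj : Function.Injective ![a, b, d, e] := by
    simp only [Matrix.vecCons, Fin.cons_injective_iff]
    simp [hab.ne, hbd.ne, hde.ne, had, hae, hbe, Function.injective_of_subsingleton]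
  refine hno (hasRainbowCopy_pathGraph ⟨_, hinj⟩ (fun k ↦ ?_) fun k l hkl ↦ ?_)
  · fin_cases k <;> assumption
  · have h₁ := hc.apply_ne hab hbd had
    have h₂ := hc.apply_ne hbd hde hbe
    fin_cases k <;> fin_cases l <;> simp_all [eq_comm]

theorem IsProperEdgeColoring.degree_eq_one_of_adj {V : Type*} {H : SimpleGraph V}
    [H.LocallyFinite] {c : Sym2 V → ℕ} (hH : H.CliqueFree 3) (hc : IsProperEdgeColoring H c)
    (hno : ¬ HasRainbowCopy H c (pathGraph 4)) {v w : V} (hvw : H.Adj v w)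
    (hv : 3 ≤ H.degree v) : H.degree w = 1 := by
  classical
  by_contra hw
  have hw₂ : 1 < #(H.neighborFinset w) := by
    have : 0 < H.degree w := H.degree_pos_iff_exists_adj w |>.mpr ⟨v, hvw.symm⟩
    rw [card_neighborFinset_eq_degree]
    omega
  obtain ⟨x, hwx, hxv⟩ := exists_mem_ne hw₂ v
  rw [mem_neighborFinset] at hwx
  have hv₂ : 1 < #((H.neighborFinset v).erase w) := by
    rw [card_erase_of_mem (by simpa using hvw), card_neighborFinset_eq_degree]
    omega
  have hcolor : ∀ u ∈ (H.neighborFinset v).erase w, c s(u, v) = c s(w, x) := by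
    intro u hu
    rw [mem_erase, mem_neighborFinset] at hu
    have hux : u ≠ x := by
      rintro rfl
      exact hH _ (is3Clique_triple_iff.mpr ⟨hvw, hu.2, hwx⟩)
    exact hc.apply_eq_of_not_hasRainbowCopy hno hu.2.symm hvw hwx hu.1 hux hxv.symm
  obtain ⟨u, hu, u', hu', huu'⟩ := one_lt_card.mp hv₂
  have hvu := (H.mem_neighborFinset v u).mp (mem_of_mem_erase hu)
  have hvu' := (H.mem_neighborFinset v u').mp (mem_of_mem_erase hu')
  refine hc.apply_ne hvu.symm hvu' huu' ?_
  rw [hcolor u hu, Sym2.eq_swap (a := v), hcolor u' hu']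

theorem IsProperEdgeColoring.ncard_edgeSet_le_of_not_hasRainbowCopy {V : Type*} [Fintype V]
    {H : SimpleGraph V} {c : Sym2 V → ℕ} (hH : H.CliqueFree 3) (hc : IsProperEdgeColoring H c)
    (hno : ¬ HasRainbowCopy H c (pathGraph 4)) : H.edgeSet.ncard ≤ Fintype.card V := by
  classical
  rw [← coe_edgeFinset, Set.ncard_coe_finset]
  exact H.card_edgeFinset_le_card_of_degree_eq_one fun _ _ ↦ hc.degree_eq_one_of_adj hH hno

/-- If `G` is triangle-free, then `ex*(G, P_3) ≤ |V(G)|`; that is,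
every subgraph of `G` with more than `|V(G)|` edges contains, under every proper
edge coloring, a rainbow path with `3` edges. -/
theorem stmt15 {V : Type*} [Fintype V] (G : SimpleGraph V)
    (h3 : ¬ ContainsCopy G (⊤ : SimpleGraph (Fin 3))) :
    rainbowExtremalNumber G (SimpleGraph.pathGraph 4) ≤ Fintype.card V ∧
    (∀ H : SimpleGraph V, H ≤ G → Fintype.card V < H.edgeSet.ncard →
      ∀ c : Sym2 V → ℕ, IsProperEdgeColoring H c →
        HasRainbowCopy H c (SimpleGraph.pathGraph 4)) := by
  have hG : G.CliqueFree 3 := cliqueFree_iff_not_containsCopy_top.mpr h3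
  refine ⟨csSup_le' ?_, fun H hHG hlt c hc ↦ ?_⟩
  · rintro _ ⟨H, hHG, ⟨c, hc, hno⟩, rfl⟩
    exact hc.ncard_edgeSet_le_of_not_hasRainbowCopy (hG.anti hHG) hno
  · by_contra hno
    exact hlt.not_ge (hc.ncard_edgeSet_le_of_not_hasRainbowCopy (hG.anti hHG) hno)
end
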